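/- Let g ∈ ℝ^d, let ‖·‖_(1), …, ‖·‖_(k) be norms on ℝ^d with positive weights λ = (λ_1, …, λ_k), and let x0 ∈ ℝ^d with x0 ≠ 0. Then the Euclidean distance of g to the cone generated by the subdifferential of the weighted sum norm at x0 satisfies: dist(g, cone ∂‖·‖_sum,λ(x0)) = min over τ ≥ 0 and x_1, …, x_k ∈ ℝ^d of ‖g − Σ_{i=1}^k x_i‖₂ subject to Σ_{i=1}^k ⟨x_i, x0⟩ = τ·‖x0‖_sum,λ and ‖x_i‖_(i)° ≤ τ·λ_i for all i ∈ [k]. -/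

import Mathlib

open MeasureTheory ProbabilityTheory
open scoped RealInnerProductSpace BigOperators Pointwise

noncomputable section

/-- Euclidean space `ℝ^d`. -/
abbrev E (d : ℕ) := EuclideanSpace ℝ (Fin d)

/-- `f` is a norm on `ℝ^d`. -/
def IsNorm {d : ℕ} (f : E d → ℝ) : Prop :=
  (∀ x y, f (x + y) ≤ f x + f y) ∧ (∀ (a : ℝ) (x : E d), f (a • x) = |a| * f x) ∧
    (∀ x, x ≠ 0 → 0 < f x)

/-- The cone generated by a set: `cone S = {τ x : x ∈ S, τ > 0}`. -/
def posCone {d : ℕ} (S : Set (E d)) : Set (E d) := {x | ∃ τ : ℝ, 0 < τ ∧ ∃ s ∈ S, x = τ • s}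

/-- The dual norm `f°(y) = sup {⟨x, y⟩ : f(x) ≤ 1}`. -/
def dualNorm {d : ℕ} (f : E d → ℝ) (y : E d) : ℝ := sSup ((fun x => ⟪x, y⟫) '' {x | f x ≤ 1})

/-- The subdifferential of a convex function `f` at `x`. -/
def subdiff {d : ℕ} (f : E d → ℝ) (x : E d) : Set (E d) :=
  {y | ∀ z, f x + ⟪y, z - x⟫ ≤ f z}

/-- The circular cone with axis `x` and angle `θ`:
`circ(x, θ) = {z : ⟨z, x⟩ ≥ cos(θ) ‖z‖₂ ‖x‖₂}`. -/
def circCone {d : ℕ} (x : E d) (θ : ℝ) : Set (E d) :=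
  {z | Real.cos θ * (‖z‖ * ‖x‖) ≤ ⟪z, x⟫}

/-- The descent cone of `f` at `x`. -/
def descentCone {d : ℕ} (f : E d → ℝ) (x : E d) : Set (E d) := posCone {y | f (x + y) ≤ f x}

/-- The polar of a cone. -/
def polarCone {d : ℕ} (K : Set (E d)) : Set (E d) := {y | ∀ x ∈ K, ⟪y, x⟫ ≤ 0}

/-- The standard Gaussian measure `N(0, Id_d)` on `ℝ^d`. -/
def stdGaussian (d : ℕ) : Measure (E d) :=
  (Measure.pi fun _ : Fin d => gaussianReal 0 1).map (MeasurableEquiv.toLp 2 (Fin d → ℝ))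

/-- The statistical dimension of a cone `K ⊆ ℝ^d`:  `δ(K) = E_g[dist(g, K°)²]`. -/
def statDim {d : ℕ} (K : Set (E d)) : ℝ :=
  ∫ g, (Metric.infDist g (polarCone K))^2 ∂(stdGaussian d)


/-! A subgradient of a sublinear function `F` at `x₀` is a linear functional dominated by `F`
that agrees with `F` at `x₀`. So, apart from `0`, the cone over `∂F(x₀)` consists of the
functionals dominated by `τ F` and equal to `τ F(x₀)` at `x₀`, for some `τ > 0`; allowing `τ = 0`
adds only `0`, which lies in the closure of the cone and so does not change the distance.
By Hahn–Banach, a functional dominated by a sum `∑ pᵢ` of sublinear functions is a sum of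
functionals dominated by the individual `pᵢ`, and for a norm `f`, being dominated by `τ λ f` means
having dual norm at most `τ λ`. Hence the feasible sums `∑ xᵢ` are exactly the cone with `0`
adjoined. -/

open Metric

structure IsSublinear {V : Type*} [AddCommGroup V] [Module ℝ V] (p : V → ℝ) : Prop where
  map_smul_of_pos : ∀ c : ℝ, 0 < c → ∀ x, p (c • x) = c * p x
  map_add_le : ∀ x y, p (x + y) ≤ p x + p y

namespace IsSublinear

variable {V : Type*} [AddCommGroup V] [Module ℝ V] {p : V → ℝ}

lemma map_zero (hp : IsSublinear p) : p 0 = 0 := by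
  have h := hp.map_smul_of_pos 2 two_pos 0
  rw [smul_zero] at h
  linarith

lemma neg_le_map_neg (hp : IsSublinear p) (x : V) : -p x ≤ p (-x) := by
  have h := hp.map_add_le x (-x)
  rw [add_neg_cancel, hp.map_zero] at h
  linarith

lemma mul_le_map_smul (hp : IsSublinear p) (c : ℝ) (x : V) : c * p x ≤ p (c • x) := by
  rcases lt_trichotomy c 0 with hc | rfl | hc
  · have h := hp.map_smul_of_pos (-c) (neg_pos.2 hc) (-x)
    rw [smul_neg, neg_smul, neg_neg] at h
    nlinarith [hp.neg_le_map_neg x]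
  · simp [hp.map_zero]
  · exact (hp.map_smul_of_pos c hc x).ge

lemma const_mul (hp : IsSublinear p) {c : ℝ} (hc : 0 ≤ c) : IsSublinear fun x => c * p x where
  map_smul_of_pos a ha x := by rw [hp.map_smul_of_pos a ha]; ring
  map_add_le x y := by nlinarith [hp.map_add_le x y]

lemma finset_sum {ι : Type*} (s : Finset ι) {p : ι → V → ℝ} (hp : ∀ i ∈ s, IsSublinear (p i)) :
    IsSublinear fun x => ∑ i ∈ s, p i x where
  map_smul_of_pos c hc x := by
    rw [Finset.mul_sum]
    exact Finset.sum_congr rfl fun i hi => (hp i hi).map_smul_of_pos c hc x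
  map_add_le x y := by
    rw [← Finset.sum_add_distrib]
    exact Finset.sum_le_sum fun i hi => (hp i hi).map_add_le x y

end IsSublinear

section InnerProductSpace

variable {V : Type*} [NormedAddCommGroup V] [InnerProductSpace ℝ V] [FiniteDimensional ℝ V]
  {p q : V → ℝ}

lemma exists_inner_eq_linearMap (Φ : V →ₗ[ℝ] ℝ) : ∃ s : V, ∀ z, ⟪s, z⟫ = Φ z :=
  ⟨(InnerProductSpace.toDual ℝ V).symm (LinearMap.toContinuousLinearMap Φ), fun z => by
    rw [InnerProductSpace.toDual_symm_apply]; rfl⟩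

namespace IsSublinear

lemma exists_inner_le_eq (hp : IsSublinear p) (x₀ : V) :
    ∃ s : V, (∀ z, ⟪s, z⟫ ≤ p z) ∧ ⟪s, x₀⟫ = p x₀ := by
  have hker : ∀ c : ℝ, c • x₀ = 0 → c • p x₀ = 0 := by
    intro c hc
    rcases smul_eq_zero.1 hc with rfl | rfl
    · exact zero_smul _ _
    · rw [hp.map_zero, smul_zero]
  set φ : V →ₗ.[ℝ] ℝ := LinearPMap.mkSpanSingleton' x₀ (p x₀) hker
  have hφ : ∀ v : φ.domain, φ v ≤ p v := by
    rintro ⟨v, hv⟩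
    obtain ⟨c, rfl⟩ := Submodule.mem_span_singleton.1 hv
    rw [LinearPMap.mkSpanSingleton'_apply, smul_eq_mul]
    exact hp.mul_le_map_smul c x₀
  obtain ⟨Φ, hΦφ, hΦp⟩ := exists_extension_of_le_sublinear φ p hp.map_smul_of_pos hp.map_add_le hφ
  obtain ⟨s, hs⟩ := exists_inner_eq_linearMap Φ
  refine ⟨s, fun z => (hs z).trans_le (hΦp z), ?_⟩
  rw [hs, hΦφ ⟨x₀, Submodule.mem_span_singleton_self x₀⟩]
  exact LinearPMap.mkSpanSingleton'_apply_self _ _ _ _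

/- Hahn–Banach for the sublinear function `(u, v) ↦ p u + q v` on `V × V`, extending
`(z, z) ↦ ⟪s, z⟫` from the diagonal; `x` represents the extension restricted to `V × {0}`. -/
lemma exists_inner_le_of_inner_le_add (hp : IsSublinear p) (hq : IsSublinear q) {s : V}
    (h : ∀ z, ⟪s, z⟫ ≤ p z + q z) :
    ∃ x : V, (∀ z, ⟪x, z⟫ ≤ p z) ∧ ∀ z, ⟪s - x, z⟫ ≤ q z := by
  set diag : V →ₗ[ℝ] V × V := LinearMap.prod LinearMap.id LinearMap.id
  set φ : V × V →ₗ.[ℝ] ℝ :=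
    ⟨LinearMap.range diag,
      ((innerₛₗ ℝ s).comp (LinearMap.fst ℝ V V)).comp (LinearMap.range diag).subtype⟩
  have hφ : ∀ v : φ.domain, φ v ≤ p v.1.1 + q v.1.2 := by
    rintro ⟨_, z, rfl⟩
    exact h z
  obtain ⟨Φ, hΦφ, hΦpq⟩ := exists_extension_of_le_sublinear φ (fun v => p v.1 + q v.2)
    (fun c hc v => by
      simp only [Prod.smul_fst, Prod.smul_snd, hp.map_smul_of_pos c hc, hq.map_smul_of_pos c hc]
      ring)
    (fun v w => by
      simp only [Prod.fst_add, Prod.snd_add]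
      linarith [hp.map_add_le v.1 w.1, hq.map_add_le v.2 w.2]) hφ
  obtain ⟨x, hx⟩ := exists_inner_eq_linearMap (Φ.comp (LinearMap.inl ℝ V V))
  have hΦdiag : ∀ z, Φ (z, z) = ⟪s, z⟫ := fun z => hΦφ ⟨diag z, z, rfl⟩
  refine ⟨x, fun z => ?_, fun z => ?_⟩
  · simpa [hx, hq.map_zero] using hΦpq (z, 0)
  · have hsplit : (0, z) = (z, z) - (z, (0 : V)) := by simp
    have := hΦpq (0, z)
    rw [hsplit, map_sub, hΦdiag] at this
    simpa [inner_sub_left, hx, hp.map_zero] using this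

end IsSublinear

lemma forall_inner_le_sum_iff {ι : Type*} (t : Finset ι) {p : ι → V → ℝ}
    (hp : ∀ i ∈ t, IsSublinear (p i)) (s : V) :
    (∀ z, ⟪s, z⟫ ≤ ∑ i ∈ t, p i z) ↔
      ∃ x : ι → V, s = ∑ i ∈ t, x i ∧ ∀ i ∈ t, ∀ z, ⟪x i, z⟫ ≤ p i z := by
  classical
  refine ⟨fun h => ?_, ?_⟩
  · induction t using Finset.cons_induction generalizing s with
    | empty =>
      refine ⟨0, ?_, by simp⟩
      simpa [real_inner_self_nonpos] using h s
    | cons a t ha ih =>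
      have hrest : IsSublinear fun z => ∑ i ∈ t, p i z :=
        IsSublinear.finset_sum t fun i hi => hp i (Finset.mem_cons_of_mem hi)
      obtain ⟨xa, hxa, hsxa⟩ := (hp a (Finset.mem_cons_self a t)).exists_inner_le_of_inner_le_add
        hrest (by simpa only [Finset.sum_cons] using h)
      obtain ⟨x, hx, hxp⟩ := ih (fun i hi => hp i (Finset.mem_cons_of_mem hi)) (s - xa) hsxa
      refine ⟨Function.update x a xa, ?_, ?_⟩
      · rw [Finset.sum_cons, Function.update_self,
          Finset.sum_congr rfl fun i hi => Function.update_of_ne (ne_of_mem_of_not_mem hi ha) _ _,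
          ← hx, add_sub_cancel]
      · intro i hi
        rcases Finset.mem_cons.1 hi with rfl | hi
        · simpa using hxa
        · simpa [Function.update_of_ne (ne_of_mem_of_not_mem hi ha)] using hxp i hi
  · rintro ⟨x, rfl, hx⟩ z
    rw [sum_inner]
    exact Finset.sum_le_sum fun i hi => hx i hi z

end InnerProductSpace

section Euclidean

variable {d : ℕ}

namespace IsSublinear

variable {F : E d → ℝ}

lemma mem_subdiff_iff (hF : IsSublinear F) {x₀ s : E d} :
    s ∈ subdiff F x₀ ↔ (∀ z, ⟪s, z⟫ ≤ F z) ∧ ⟪s, x₀⟫ = F x₀ := by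
  refine ⟨fun hs => ?_, fun ⟨hle, heq⟩ z => by linarith [hle z, inner_sub_right (𝕜 := ℝ) s z x₀]⟩
  -- testing the subgradient inequality at `0` and at `2 • x₀` forces `⟪s, x₀⟫ = F x₀`
  have h0 := hs 0
  have h2 := hs (2 • x₀)
  rw [zero_sub, inner_neg_right, hF.map_zero] at h0
  rw [two_smul, add_sub_cancel_right, ← two_smul ℝ, hF.map_smul_of_pos 2 two_pos] at h2
  have heq : ⟪s, x₀⟫ = F x₀ := by linarith
  exact ⟨fun z => by linarith [hs z, inner_sub_right (𝕜 := ℝ) s z x₀], heq⟩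

lemma subdiff_nonempty (hF : IsSublinear F) (x₀ : E d) : (subdiff F x₀).Nonempty :=
  (hF.exists_inner_le_eq x₀).imp fun _ => hF.mem_subdiff_iff.2

lemma mem_posCone_subdiff_iff (hF : IsSublinear F) {x₀ y : E d} :
    y ∈ posCone (subdiff F x₀) ↔ ∃ τ > 0, (∀ z, ⟪y, z⟫ ≤ τ * F z) ∧ ⟪y, x₀⟫ = τ * F x₀ := by
  simp only [posCone, Set.mem_ofPred_eq, hF.mem_subdiff_iff]
  constructor
  · rintro ⟨τ, hτ, s, ⟨hle, heq⟩, rfl⟩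
    refine ⟨τ, hτ, fun z => ?_, ?_⟩
    · rw [real_inner_smul_left]
      exact mul_le_mul_of_nonneg_left (hle z) hτ.le
    · rw [real_inner_smul_left, heq]
  · rintro ⟨τ, hτ, hle, heq⟩
    refine ⟨τ, hτ, τ⁻¹ • y, ⟨fun z => ?_, ?_⟩, (smul_inv_smul₀ hτ.ne' y).symm⟩
    · rw [real_inner_smul_left, inv_mul_le_iff₀ hτ]
      exact hle z
    · rw [real_inner_smul_left, heq, inv_mul_cancel_left₀ hτ.ne']

lemma mem_insert_zero_posCone_subdiff_iff (hF : IsSublinear F) {x₀ y : E d} :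
    y ∈ insert 0 (posCone (subdiff F x₀)) ↔
      ∃ τ ≥ 0, (∀ z, ⟪y, z⟫ ≤ τ * F z) ∧ ⟪y, x₀⟫ = τ * F x₀ := by
  rw [Set.mem_insert_iff, hF.mem_posCone_subdiff_iff]
  constructor
  · rintro (rfl | ⟨τ, hτ, h⟩)
    · exact ⟨0, le_rfl, by simp⟩
    · exact ⟨τ, hτ.le, h⟩
  · rintro ⟨τ, hτ, h⟩
    rcases hτ.eq_or_lt with rfl | hτ
    · left
      simpa [real_inner_self_nonpos] using h.1 y
    · exact Or.inr ⟨τ, hτ, h⟩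

end IsSublinear

lemma zero_mem_closure_posCone {S : Set (E d)} (hS : S.Nonempty) :
    (0 : E d) ∈ closure (posCone S) := by
  obtain ⟨s, hs⟩ := hS
  have hlim : Filter.Tendsto (fun τ : ℝ => τ • s) (nhdsWithin 0 (Set.Ioi 0)) (nhds 0) :=
    ((continuous_id.smul continuous_const).tendsto' 0 0 (zero_smul ℝ s)).mono_left
      nhdsWithin_le_nhds
  exact mem_closure_of_tendsto hlim
    (eventually_nhdsWithin_of_forall fun τ hτ => ⟨τ, hτ, s, hs, rfl⟩)

lemma infDist_insert_zero_posCone {S : Set (E d)} (hS : S.Nonempty) (g : E d) :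
    infDist g (insert 0 (posCone S)) = infDist g (posCone S) := by
  obtain ⟨s, hs⟩ := hS
  have hK : (posCone S).Nonempty := ⟨(1 : ℝ) • s, 1, one_pos, s, hs, rfl⟩
  refine le_antisymm (infDist_le_infDist_of_subset (Set.subset_insert _ _) hK) ?_
  rw [← infDist_closure (x := g) (s := posCone S)]
  exact infDist_le_infDist_of_subset
    (Set.insert_subset (zero_mem_closure_posCone ⟨s, hs⟩) subset_closure) (Set.insert_nonempty _ _)

namespace IsNorm

variable {f : E d → ℝ}

lemma isSublinear (hf : IsNorm f) : IsSublinear f where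
  map_smul_of_pos c hc x := by rw [hf.2.1, abs_of_pos hc]
  map_add_le := hf.1

lemma nonneg (hf : IsNorm f) (x : E d) : 0 ≤ f x := by
  rcases eq_or_ne x 0 with rfl | hx
  · exact hf.isSublinear.map_zero.ge
  · exact (hf.2.2 x hx).le

lemma continuous (hf : IsNorm f) : Continuous f := by
  have hconv : ConvexOn ℝ Set.univ f := ⟨convex_univ, fun x _ y _ a b ha hb _ => by
    simpa only [hf.2.1, abs_of_nonneg ha, abs_of_nonneg hb, smul_eq_mul] using hf.1 (a • x) (b • y)⟩
  exact continuousOn_univ.1 (hconv.continuousOn isOpen_univ)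

lemma exists_pos_mul_norm_le (hf : IsNorm f) : ∃ c > 0, ∀ x, c * ‖x‖ ≤ f x := by
  obtain ⟨c, hc, hcf⟩ := (isCompact_sphere (0 : E d) 1).exists_forall_le'
    hf.continuous.continuousOn fun u hu => hf.2.2 u (ne_zero_of_mem_unit_sphere ⟨u, hu⟩)
  refine ⟨c, hc, fun x => ?_⟩
  rcases eq_or_ne x 0 with rfl | hx
  · simp [hf.isSublinear.map_zero]
  · have hx' : 0 < ‖x‖ := norm_pos_iff.2 hx
    have hu : ‖x‖⁻¹ • x ∈ sphere (0 : E d) 1 := by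
      simp [norm_smul, hx'.ne']
    have := hcf _ hu
    rw [hf.2.1, abs_of_pos (inv_pos.2 hx'), le_inv_mul_iff₀ hx'] at this
    linarith

lemma bddAbove_inner_unitBall (hf : IsNorm f) (y : E d) :
    BddAbove ((fun x => ⟪x, y⟫) '' {x | f x ≤ 1}) := by
  obtain ⟨c, hc, hcf⟩ := hf.exists_pos_mul_norm_le
  refine ⟨‖y‖ / c, ?_⟩
  rintro _ ⟨x, hx, rfl⟩
  have hcx : c * ‖x‖ ≤ 1 := (hcf x).trans hx
  rw [le_div_iff₀ hc]
  nlinarith [real_inner_le_norm x y, norm_nonneg y]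

lemma inner_le_dualNorm_mul (hf : IsNorm f) (y z : E d) : ⟪z, y⟫ ≤ dualNorm f y * f z := by
  rcases eq_or_ne z 0 with rfl | hz
  · simp [hf.isSublinear.map_zero]
  have hfz := hf.2.2 z hz
  have hu : f ((f z)⁻¹ • z) ≤ 1 := by
    rw [hf.2.1, abs_of_pos (inv_pos.2 hfz), inv_mul_cancel₀ hfz.ne']
  have : ⟪(f z)⁻¹ • z, y⟫ ≤ dualNorm f y := le_csSup (hf.bddAbove_inner_unitBall y) ⟨_, hu, rfl⟩
  rw [real_inner_smul_left, inv_mul_le_iff₀ hfz] at this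
  linarith

lemma dualNorm_le_iff (hf : IsNorm f) {y : E d} {b : ℝ} (hb : 0 ≤ b) :
    dualNorm f y ≤ b ↔ ∀ z, ⟪y, z⟫ ≤ b * f z := by
  refine ⟨fun h z => ?_, fun h => Real.sSup_le ?_ hb⟩
  · rw [real_inner_comm]
    exact (hf.inner_le_dualNorm_mul y z).trans
      (mul_le_mul_of_nonneg_right h (hf.nonneg z))
  · rintro _ ⟨x, hx, rfl⟩
    dsimp only
    rw [real_inner_comm]
    exact (h x).trans (mul_le_of_le_one_right hb hx)

end IsNorm

lemma forall_inner_le_weightedSum_iff {ι : Type*} [Fintype ι] {f : ι → E d → ℝ}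
    (hf : ∀ i, IsNorm (f i)) {lam : ι → ℝ} (hlam : ∀ i, 0 ≤ lam i) (y : E d) :
    (∀ z, ⟪y, z⟫ ≤ ∑ i, lam i * f i z) ↔
      ∃ x : ι → E d, y = ∑ i, x i ∧ ∀ i, dualNorm (f i) (x i) ≤ lam i := by
  simp only [forall_inner_le_sum_iff Finset.univ
    (fun i _ => (hf i).isSublinear.const_mul (hlam i)), Finset.mem_univ, true_implies,
    (hf _).dualNorm_le_iff (hlam _)]

lemma isSublinear_weightedSum {ι : Type*} [Fintype ι] {f : ι → E d → ℝ}
    (hf : ∀ i, IsNorm (f i)) {lam : ι → ℝ} (hlam : ∀ i, 0 ≤ lam i) :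
    IsSublinear fun x => ∑ i, lam i * f i x :=
  IsSublinear.finset_sum _ fun i _ => (hf i).isSublinear.const_mul (hlam i)

lemma mem_insert_zero_posCone_subdiff_weightedSum_iff {ι : Type*} [Fintype ι]
    {f : ι → E d → ℝ} (hf : ∀ i, IsNorm (f i)) {lam : ι → ℝ} (hlam : ∀ i, 0 ≤ lam i)
    {x₀ y : E d} :
    y ∈ insert 0 (posCone (subdiff (fun x => ∑ i, lam i * f i x) x₀)) ↔
      ∃ τ : ℝ, 0 ≤ τ ∧ ∃ x : ι → E d, y = ∑ i, x i ∧
        (∑ i, ⟪x i, x₀⟫) = τ * (∑ i, lam i * f i x₀) ∧ ∀ i, dualNorm (f i) (x i) ≤ τ * lam i := by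
  rw [(isSublinear_weightedSum hf hlam).mem_insert_zero_posCone_subdiff_iff]
  refine exists_congr fun τ => and_congr_right fun hτ => ?_
  have hτlam : ∀ z, τ * ∑ i, lam i * f i z = ∑ i, τ * lam i * f i z := fun z => by
    simp only [Finset.mul_sum, mul_assoc]
  simp only [hτlam, forall_inner_le_weightedSum_iff hf fun i => mul_nonneg hτ (hlam i)]
  constructor
  · rintro ⟨⟨x, rfl, hx⟩, hx₀⟩
    exact ⟨x, rfl, by rwa [← sum_inner], hx⟩
  · rintro ⟨x, rfl, hx₀, hx⟩
    exact ⟨⟨x, rfl, hx⟩, by rwa [sum_inner]⟩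

end Euclidean

theorem infDist_coneSubdiff_weightedSum_eq_general {d k : ℕ} (g : E d)
    (f : Fin k → E d → ℝ) (hf : ∀ i, IsNorm (f i))
    (lam : Fin k → ℝ) (hlam : ∀ i, 0 < lam i)
    (x0 : E d) :
    Metric.infDist g (posCone (subdiff (fun x => ∑ i, lam i * f i x) x0)) =
      sInf {t : ℝ | ∃ τ : ℝ, 0 ≤ τ ∧ ∃ x : Fin k → E d,
        t = ‖g - ∑ i, x i‖ ∧
        (∑ i, ⟪x i, x0⟫) = τ * (∑ i, lam i * f i x0) ∧
        ∀ i, dualNorm (f i) (x i) ≤ τ * lam i} := by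
  have hlam' : ∀ i, 0 ≤ lam i := fun i => (hlam i).le
  have hne := Set.insert_nonempty 0 (posCone (subdiff (fun x => ∑ i, lam i * f i x) x0))
  rw [← infDist_insert_zero_posCone ((isSublinear_weightedSum hf hlam').subdiff_nonempty x0),
    ← (isGLB_infDist hne).csInf_eq (hne.image _)]
  congr 1
  ext t
  simp only [Set.mem_image, mem_insert_zero_posCone_subdiff_weightedSum_iff hf hlam']
  constructor
  · rintro ⟨_, ⟨τ, hτ, x, rfl, hx⟩, rfl⟩
    exact ⟨τ, hτ, x, dist_eq_norm _ _, hx⟩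
  · rintro ⟨τ, hτ, x, rfl, hx⟩
    exact ⟨_, ⟨τ, hτ, x, rfl, hx⟩, dist_eq_norm _ _⟩

/-- For `g ∈ ℝ^d`, positive weights `λ`, and `x0 ≠ 0`, the Euclidean distance
of `g` to the cone generated by the subdifferential of the weighted sum norm at `x0` equals
the minimum of `‖g − Σ_i x_i‖₂` over `τ ≥ 0` and `x_1, …, x_k` subject to
`Σ_i ⟨x_i, x0⟩ = τ ‖x0‖_sum,λ` and `‖x_i‖_(i)° ≤ τ λ_i` for all `i`. -/
theorem infDist_coneSubdiff_weightedSum_eq {d k : ℕ} (hk : 0 < k) (g : E d)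
    (f : Fin k → E d → ℝ) (hf : ∀ i, IsNorm (f i))
    (lam : Fin k → ℝ) (hlam : ∀ i, 0 < lam i)
    (x0 : E d) (hx0 : x0 ≠ 0) :
    Metric.infDist g (posCone (subdiff (fun x => ∑ i, lam i * f i x) x0)) =
      sInf {t : ℝ | ∃ τ : ℝ, 0 ≤ τ ∧ ∃ x : Fin k → E d,
        t = ‖g - ∑ i, x i‖ ∧
        (∑ i, ⟪x i, x0⟫) = τ * (∑ i, lam i * f i x0) ∧
        ∀ i, dualNorm (f i) (x i) ≤ τ * lam i} :=
  infDist_coneSubdiff_weightedSum_eq_general g f hf lam hlam x0
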